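/- arXiv:2002.03996 — 2 statements merged into one kernel-verified Lean document; each statement's English description precedes it below -/
import Mathlib

section
/- Let Θ(l,i,j) be i.i.d. uniform on {-σ,+σ} weights of a depth-d linear network (all gates 1) with d_in = 1 and widths w, and let K_0 = Σ_{m=1}^{d_net} (∂ŷ/∂θ(m))² be the Gram value at a single input x = 1. Then E[K_0] = d·(wσ²)^(d-1). -/
/-- Node of a path `q` of a depth-`d` linear network with `d_in = 1` at depth `j`:
the input node and the output node are padded as node `0`. -/
def node13 (d w : ℕ) (hw : 0 < w) (q : Fin (d-1) → Fin w) (j : ℕ) : Fin w :=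
  if h : 1 ≤ j ∧ j ≤ d - 1 then q ⟨j - 1, by omega⟩ else ⟨0, hw⟩

/-- Weight (edge) index used by path `q` at layer `l`. -/
def edge13 (d w : ℕ) (hw : 0 < w) (q : Fin (d-1) → Fin w) (l : Fin d) :
    Fin d × Fin w × Fin w :=
  (l, node13 d w hw q l.val, node13 d w hw q (l.val + 1))

lemma edge13_fst (d w : ℕ) (hw : 0 < w) (q : Fin (d-1) → Fin w) (l : Fin d) :
    (edge13 d w hw q l).1 = l := rfl

/-- If two paths agree on all edges outside layer `m.1`, and both pass through `m`,
then they are equal. -/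
lemma paths_eq (d w : ℕ) (hw : 0 < w) (m : Fin d × Fin w × Fin w)
    (q q' : Fin (d-1) → Fin w)
    (hq : edge13 d w hw q m.1 = m) (hq' : edge13 d w hw q' m.1 = m)
    (hall : ∀ l ∈ Finset.univ.erase m.1, edge13 d w hw q l = edge13 d w hw q' l) :
    q = q' := by
  funext j
  have hj : (j : ℕ) < d - 1 := j.isLt
  by_cases hm : (m.1 : ℕ) = (j : ℕ) + 1
  · -- both constrained at node j+1 = m.2.1
    have h1 : node13 d w hw q ((j:ℕ)+1) = m.2.1 := by
      have := congrArg (fun p => p.2.1) hq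
      simpa [edge13, hm] using this
    have h2 : node13 d w hw q' ((j:ℕ)+1) = m.2.1 := by
      have := congrArg (fun p => p.2.1) hq'
      simpa [edge13, hm] using this
    have e1 : node13 d w hw q ((j:ℕ)+1) = q j := by
      rw [node13, dif_pos ⟨by omega, by omega⟩]
      congr 1
    have e2 : node13 d w hw q' ((j:ℕ)+1) = q' j := by
      rw [node13, dif_pos ⟨by omega, by omega⟩]
      congr 1
    rw [← e1, ← e2, h1, h2]
  · -- layer j+1 is outside m.1
    have hlt : (j : ℕ) + 1 < d := by omega
    have hl : (⟨(j:ℕ)+1, hlt⟩ : Fin d) ∈ Finset.univ.erase m.1 := by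
      simp only [Finset.mem_erase, Finset.mem_univ, and_true]
      intro h; exact hm (by rw [← h])
    have := hall _ hl
    have h1 : node13 d w hw q ((j:ℕ)+1) = node13 d w hw q' ((j:ℕ)+1) := by
      have := congrArg (fun p => p.2.1) this
      simpa [edge13] using this
    have e1 : node13 d w hw q ((j:ℕ)+1) = q j := by
      rw [node13, dif_pos ⟨by omega, by omega⟩]
      congr 1
    have e2 : node13 d w hw q' ((j:ℕ)+1) = q' j := by
      rw [node13, dif_pos ⟨by omega, by omega⟩]
      congr 1
    rw [← e1, ← e2, h1]

lemma sum_flip_zero {I : Type*} [Fintype I] [DecidableEq I] (F : (I → Bool) → ℝ) (e₀ : I)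
    (h : ∀ ω, F (fun e => if e = e₀ then !ω e else ω e) = -F ω) :
    ∑ ω : I → Bool, F ω = 0 := by
  have hinv : Function.Involutive
      (fun ω : I → Bool => fun e => if e = e₀ then !ω e else ω e) := by
    intro ω; funext e; by_cases he : e = e₀ <;> simp [he]
  have h1 : ∑ ω : I → Bool,
      F ((hinv.toPerm _) ω) = ∑ ω : I → Bool, F ω := Equiv.sum_comp _ F
  have h2 : ∀ ω : I → Bool, F ((hinv.toPerm _) ω) = -F ω := fun ω => h ω
  rw [Finset.sum_congr rfl (fun ω _ => h2 ω), Finset.sum_neg_distrib] at h1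
  linarith

lemma key_sum (d w : ℕ) (hw : 0 < w) (σ : ℝ) (m : Fin d × Fin w × Fin w)
    (q q' : Fin (d-1) → Fin w) :
    ∑ ω : Fin d × Fin w × Fin w → Bool,
      (((if edge13 d w hw q m.1 = m then (1:ℝ) else 0) *
        ∏ l ∈ Finset.univ.erase m.1, (if ω (edge13 d w hw q l) then σ else -σ)) *
      ((if edge13 d w hw q' m.1 = m then (1:ℝ) else 0) *
        ∏ l ∈ Finset.univ.erase m.1, (if ω (edge13 d w hw q' l) then σ else -σ)))
    = if q = q' ∧ edge13 d w hw q m.1 = m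
      then (2:ℝ)^(Fintype.card (Fin d × Fin w × Fin w)) * (σ^2)^(d-1) else 0 := by
  by_cases hq : edge13 d w hw q m.1 = m
  · by_cases hq' : edge13 d w hw q' m.1 = m
    · simp only [hq, hq', eq_self_iff_true, if_true, one_mul, and_true]
      by_cases hall : ∀ l ∈ Finset.univ.erase m.1, edge13 d w hw q l = edge13 d w hw q' l
      · have hqq' : q = q' := paths_eq d w hw m q q' hq hq' hall
        subst hqq'
        rw [if_pos rfl]
        have hterm : ∀ ω : Fin d × Fin w × Fin w → Bool,
            (∏ l ∈ Finset.univ.erase m.1, (if ω (edge13 d w hw q l) then σ else -σ)) *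
            (∏ l ∈ Finset.univ.erase m.1, (if ω (edge13 d w hw q l) then σ else -σ))
            = (σ^2)^(d-1) := by
          intro ω
          rw [← Finset.prod_mul_distrib]
          have hc : (Finset.univ.erase m.1).card = d - 1 := by
            rw [Finset.card_erase_of_mem (Finset.mem_univ _), Finset.card_univ,
              Fintype.card_fin]
          calc ∏ l ∈ Finset.univ.erase m.1,
                ((if ω (edge13 d w hw q l) then σ else -σ) *
                 (if ω (edge13 d w hw q l) then σ else -σ))
              = ∏ _l ∈ Finset.univ.erase m.1, σ^2 := by
                refine Finset.prod_congr rfl fun l _ => ?_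
                by_cases hb : ω (edge13 d w hw q l) <;> simp [hb] <;> ring
            _ = (σ^2)^(d-1) := by rw [Finset.prod_const, hc]
        rw [Finset.sum_congr rfl (fun ω _ => hterm ω), Finset.sum_const,
          Finset.card_univ, Fintype.card_fun, Fintype.card_bool, nsmul_eq_mul]
        push_cast
        ring
      · push_neg at hall
        obtain ⟨l₁, hl₁, hne⟩ := hall
        rw [if_neg (fun h : q = q' => hne (by rw [h]))]
        apply sum_flip_zero _ (edge13 d w hw q l₁)
        intro ω
        simp only
        have hA : (∏ l ∈ Finset.univ.erase m.1,
            (if (if edge13 d w hw q l = edge13 d w hw q l₁ then !ω (edge13 d w hw q l)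
                else ω (edge13 d w hw q l)) then σ else -σ))
            = -(∏ l ∈ Finset.univ.erase m.1, (if ω (edge13 d w hw q l) then σ else -σ)) := by
          rw [← Finset.mul_prod_erase _ _ hl₁, ← Finset.mul_prod_erase _
            (fun l => (if ω (edge13 d w hw q l) then σ else -σ)) hl₁]
          have hfac : (if (if edge13 d w hw q l₁ = edge13 d w hw q l₁
              then !ω (edge13 d w hw q l₁) else ω (edge13 d w hw q l₁)) then σ else -σ)
              = -(if ω (edge13 d w hw q l₁) then σ else -σ) := by
            by_cases hb : ω (edge13 d w hw q l₁) <;> simp [hb]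
          rw [hfac]
          have hrest : ∀ l ∈ (Finset.univ.erase m.1).erase l₁,
              (if (if edge13 d w hw q l = edge13 d w hw q l₁ then !ω (edge13 d w hw q l)
                else ω (edge13 d w hw q l)) then σ else -σ)
              = (if ω (edge13 d w hw q l) then σ else -σ) := by
            intro l hl
            have hll : l ≠ l₁ := (Finset.mem_erase.mp hl).1
            rw [if_neg (fun h => hll (congrArg Prod.fst h))]
          rw [Finset.prod_congr rfl hrest]
          ring
        have hB : (∏ l ∈ Finset.univ.erase m.1,
            (if (if edge13 d w hw q' l = edge13 d w hw q l₁ then !ω (edge13 d w hw q' l)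
                else ω (edge13 d w hw q' l)) then σ else -σ))
            = ∏ l ∈ Finset.univ.erase m.1, (if ω (edge13 d w hw q' l) then σ else -σ) := by
          refine Finset.prod_congr rfl fun l hl => ?_
          have : edge13 d w hw q' l ≠ edge13 d w hw q l₁ := by
            intro h
            have hll : l = l₁ := congrArg Prod.fst h
            subst hll
            exact hne h.symm
          rw [if_neg this]
        rw [hA, hB]
        ring
    · have hcond : ¬(q = q' ∧ edge13 d w hw q m.1 = m) := fun h => hq' (h.1 ▸ h.2)
      rw [if_neg hcond]
      simp [if_neg hq']
  · have hcond : ¬(q = q' ∧ edge13 d w hw q m.1 = m) := fun h => hq h.2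
    rw [if_neg hcond]
    simp [if_neg hq]

lemma count13 (d w : ℕ) (hw : 0 < w) (K : ℝ) :
    ∑ m : Fin d × Fin w × Fin w, ∑ q : Fin (d-1) → Fin w,
      (if edge13 d w hw q m.1 = m then K else 0)
    = (d : ℝ) * (w : ℝ)^(d-1) * K := by
  rw [Finset.sum_comm]
  have inner : ∀ q : Fin (d-1) → Fin w,
      ∑ m : Fin d × Fin w × Fin w, (if edge13 d w hw q m.1 = m then K else 0)
      = (d : ℝ) * K := by
    intro q
    rw [Fintype.sum_prod_type]
    have hl : ∀ l : Fin d,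
        ∑ y : Fin w × Fin w, (if edge13 d w hw q l = (l, y) then K else 0) = K := by
      intro l
      simp only [edge13, Prod.mk.injEq, true_and]
      rw [Finset.sum_ite_eq]
      simp
    rw [Finset.sum_congr rfl fun l _ => hl l, Finset.sum_const, Finset.card_univ,
      Fintype.card_fin, nsmul_eq_mul]
  rw [Finset.sum_congr rfl fun q _ => inner q, Finset.sum_const, Finset.card_univ,
    Fintype.card_fun, Fintype.card_fin, Fintype.card_fin, nsmul_eq_mul]
  push_cast
  ring

/-- For a depth-`d` deep linear network (all gates `1`) with `d_in = 1`,
width `w`, i.i.d. uniform `±σ` weights (modelled by the uniform distribution on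
`Fin d × Fin w × Fin w → Bool`) and input `x = 1`, the expected Gram value
`E[K₀] = E[∑_m (∂ŷ/∂θ(m))²] = d · (wσ²)^(d-1)`, where
`∂ŷ/∂θ(m) = ∑_{q : paths through θ(m)} ∏_{l ≠ l'(m)} Θ(edge of q at layer l)`. -/
theorem stmt13 (d w : ℕ) (hd : 1 ≤ d) (hw : 0 < w) (σ : ℝ) :
    (∑ ω : Fin d × Fin w × Fin w → Bool,
      (1/2 : ℝ) ^ (Fintype.card (Fin d × Fin w × Fin w)) *
      ∑ m : Fin d × Fin w × Fin w,
        (∑ q : Fin (d-1) → Fin w,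
          (if edge13 d w hw q m.1 = m then (1:ℝ) else 0) *
          ∏ l ∈ Finset.univ.erase m.1, (if ω (edge13 d w hw q l) then σ else -σ)) ^ 2)
      = d * (w * σ ^ 2) ^ (d - 1) := by
  classical
  set N := Fintype.card (Fin d × Fin w × Fin w) with hN
  set a : (Fin d × Fin w × Fin w → Bool) → Fin d × Fin w × Fin w →
      (Fin (d-1) → Fin w) → ℝ := fun ω m q =>
    (if edge13 d w hw q m.1 = m then (1:ℝ) else 0) *
      ∏ l ∈ Finset.univ.erase m.1, (if ω (edge13 d w hw q l) then σ else -σ) with ha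
  set K : ℝ := (2:ℝ)^N * (σ^2)^(d-1) with hK
  calc (∑ ω : Fin d × Fin w × Fin w → Bool,
          (1/2 : ℝ) ^ N * ∑ m : Fin d × Fin w × Fin w,
            (∑ q : Fin (d-1) → Fin w, a ω m q) ^ 2)
      = (1/2 : ℝ)^N * ∑ ω : Fin d × Fin w × Fin w → Bool,
          ∑ m : Fin d × Fin w × Fin w, (∑ q : Fin (d-1) → Fin w, a ω m q) ^ 2 := by
        rw [← Finset.mul_sum]
    _ = (1/2 : ℝ)^N * ∑ m : Fin d × Fin w × Fin w, ∑ q : Fin (d-1) → Fin w,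
          ∑ q' : Fin (d-1) → Fin w, ∑ ω : Fin d × Fin w × Fin w → Bool,
            a ω m q * a ω m q' := by
        congr 1
        rw [Finset.sum_comm]
        refine Finset.sum_congr rfl fun m _ => ?_
        have h1 : ∀ ω : Fin d × Fin w × Fin w → Bool,
            (∑ q : Fin (d-1) → Fin w, a ω m q) ^ 2
            = ∑ q : Fin (d-1) → Fin w, ∑ q' : Fin (d-1) → Fin w, a ω m q * a ω m q' :=
          fun ω => by rw [sq, Finset.sum_mul_sum]
        rw [Finset.sum_congr rfl fun ω _ => h1 ω, Finset.sum_comm]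
        exact Finset.sum_congr rfl fun q _ => Finset.sum_comm
    _ = (1/2 : ℝ)^N * ∑ m : Fin d × Fin w × Fin w, ∑ q : Fin (d-1) → Fin w,
          ∑ q' : Fin (d-1) → Fin w,
            (if q = q' ∧ edge13 d w hw q m.1 = m then K else 0) := by
        refine congrArg _ (Finset.sum_congr rfl fun m _ => Finset.sum_congr rfl fun q _ =>
          Finset.sum_congr rfl fun q' _ => ?_)
        exact key_sum d w hw σ m q q'
    _ = (1/2 : ℝ)^N * ∑ m : Fin d × Fin w × Fin w, ∑ q : Fin (d-1) → Fin w,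
          (if edge13 d w hw q m.1 = m then K else 0) := by
        refine congrArg _ (Finset.sum_congr rfl fun m _ => Finset.sum_congr rfl fun q _ => ?_)
        simp only [ite_and]
        rw [Finset.sum_ite_eq]
        simp
    _ = (1/2 : ℝ)^N * ((d : ℝ) * (w : ℝ)^(d-1) * K) := by
        rw [count13]
    _ = d * (w * σ ^ 2) ^ (d - 1) := by
        rw [hK]
        have h2 : (1/2:ℝ)^N * (2:ℝ)^N = 1 := by
          rw [one_div, inv_pow, inv_mul_cancel₀ (by positivity)]
        have : (1/2:ℝ)^N * ((d:ℝ) * (w:ℝ)^(d-1) * ((2:ℝ)^N * (σ^2)^(d-1)))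
            = ((1/2:ℝ)^N * (2:ℝ)^N) * ((d:ℝ) * ((w:ℝ)^(d-1) * (σ^2)^(d-1))) := by ring
        rw [this, h2, one_mul, ← mul_pow]
end

section
/- Under frozen gates independent of i.i.d. symmetric ±σ weights, the expected Gram matrix satisfies E[K(s,s')] = d·σ^(2(d-1)) · ⟨x_s, x_{s'}⟩-weighted overlap, namely E[K(s,s')] = d·σ^(2(d-1)) · Σ_i x(i,s)x(i,s')·λ(s,s') where λ(s,s') = Σ_{p starting at a fixed node} A(x_s,p)A(x_{s'},p). In matrix form, E[K] = d·σ^(2(d-1)) · (x^T x) ⊙ λ (Hadamard product). -/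
open Finset in
private lemma expSign {E : Type*} [Fintype E] [DecidableEq E] (S T : Finset E) :
    ∑ ω : E → Bool, (1/2:ℝ) ^ (Fintype.card E) *
      ((∏ a ∈ S, (if ω a then (1:ℝ) else -1)) * ∏ a ∈ T, (if ω a then (1:ℝ) else -1))
    = if S = T then 1 else 0 := by
  have h1 : ∀ (ω : E → Bool),
      (1/2:ℝ) ^ (Fintype.card E) *
      ((∏ a ∈ S, (if ω a then (1:ℝ) else -1)) * ∏ a ∈ T, (if ω a then (1:ℝ) else -1))
      = ∏ a : E, ((1/2:ℝ) * ((if a ∈ S then (if ω a then (1:ℝ) else -1) else 1)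
          * (if a ∈ T then (if ω a then (1:ℝ) else -1) else 1))) := by
    intro ω
    rw [Finset.prod_mul_distrib, Finset.prod_mul_distrib, Finset.prod_const,
      Finset.card_univ, Finset.prod_ite_mem, Finset.prod_ite_mem,
      Finset.univ_inter, Finset.univ_inter]
  simp only [h1]
  rw [← Fintype.prod_sum (fun a b => (1/2:ℝ) *
    ((if a ∈ S then (if b = true then (1:ℝ) else -1) else 1)
      * (if a ∈ T then (if b = true then (1:ℝ) else -1) else 1)))]
  have h2 : ∀ a : E,
      (∑ b : Bool, (1/2:ℝ) * ((if a ∈ S then (if b = true then (1:ℝ) else -1) else 1)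
        * (if a ∈ T then (if b = true then (1:ℝ) else -1) else 1)))
      = if (a ∈ S ↔ a ∈ T) then (1:ℝ) else 0 := by
    intro a
    rw [Fintype.sum_bool]
    by_cases hS : a ∈ S <;> by_cases hT : a ∈ T <;> simp [hS, hT] <;> norm_num
  rw [Finset.prod_congr rfl (fun a _ => h2 a)]
  by_cases hST : S = T
  · simp [hST]
  · rw [if_neg hST]
    obtain ⟨a, ha⟩ : ∃ a, ¬(a ∈ S ↔ a ∈ T) := by
      by_contra h
      push_neg at h
      exact hST (Finset.ext fun a => (h a))
    exact Finset.prod_eq_zero (Finset.mem_univ a) (by simp [ha])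

open Finset in
private lemma auxTerm {R : Type*} [Fintype R] [DecidableEq R] {d : ℕ}
    (m : Fin d × R) (f g : Fin d → R) (σ : ℝ) :
    ∑ ω : (Fin d × R) → Bool,
      (1/2:ℝ) ^ (Fintype.card (Fin d × R)) *
      ((if (m.1, f m.1) = m then
          ∏ l ∈ Finset.univ.erase m.1, (if ω (l, f l) then σ else -σ) else 0) *
       (if (m.1, g m.1) = m then
          ∏ l ∈ Finset.univ.erase m.1, (if ω (l, g l) then σ else -σ) else 0))
    = if (m.1, f m.1) = m ∧ f = g then σ ^ (2*(d-1)) else 0 := by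
  by_cases hf : (m.1, f m.1) = m
  · by_cases hg : (m.1, g m.1) = m
    · simp only [hf, hg, if_true]
      have hcard : (Finset.univ.erase m.1).card = d - 1 := by
        rw [Finset.card_erase_of_mem (Finset.mem_univ _), Finset.card_univ,
          Fintype.card_fin]
      have hsgn : ∀ (h : Fin d → R) (ω : Fin d × R → Bool),
          (∏ l ∈ Finset.univ.erase m.1, (if ω (l, h l) then σ else -σ))
          = σ ^ (d-1) * ∏ a ∈ (Finset.univ.erase m.1).image (fun l => (l, h l)),
              (if ω a then (1:ℝ) else -1) := by
        intro h ω
        rw [Finset.prod_image (fun a _ b _ hab => congrArg Prod.fst hab)]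
        rw [← hcard, ← Finset.prod_const, ← Finset.prod_mul_distrib]
        refine Finset.prod_congr rfl fun l _ => ?_
        by_cases hω : ω (l, h l) <;> simp [hω]
      simp only [hsgn]
      have hre : ∀ ω : Fin d × R → Bool,
          (1/2:ℝ) ^ (Fintype.card (Fin d × R)) *
          ((σ ^ (d-1) * ∏ a ∈ (Finset.univ.erase m.1).image (fun l => (l, f l)),
              (if ω a then (1:ℝ) else -1)) *
           (σ ^ (d-1) * ∏ a ∈ (Finset.univ.erase m.1).image (fun l => (l, g l)),
              (if ω a then (1:ℝ) else -1)))
          = σ ^ (2*(d-1)) * ((1/2:ℝ) ^ (Fintype.card (Fin d × R)) *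
            ((∏ a ∈ (Finset.univ.erase m.1).image (fun l => (l, f l)),
              (if ω a then (1:ℝ) else -1)) *
             (∏ a ∈ (Finset.univ.erase m.1).image (fun l => (l, g l)),
              (if ω a then (1:ℝ) else -1)))) := by
        intro ω
        rw [two_mul, pow_add]
        ring
      simp only [hre]
      rw [← Finset.mul_sum, expSign]
      have himg : ((Finset.univ.erase m.1).image (fun l => (l, f l))
          = (Finset.univ.erase m.1).image (fun l => (l, g l))) ↔ f = g := by
        constructor
        · intro h
          funext l
          by_cases hl : l = m.1
          · rw [hl]
            have h1 : f m.1 = m.2 := (Prod.mk.injEq _ _ _ _).mp hf |>.2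
            have h2 : g m.1 = m.2 := (Prod.mk.injEq _ _ _ _).mp hg |>.2
            rw [h1, h2]
          · have hmem : (l, f l) ∈ (Finset.univ.erase m.1).image (fun l => (l, g l)) := by
              rw [← h]
              exact Finset.mem_image_of_mem _ (Finset.mem_erase.mpr ⟨hl, Finset.mem_univ _⟩)
            obtain ⟨l', _, hl'⟩ := Finset.mem_image.mp hmem
            obtain ⟨h1, h2⟩ := Prod.mk.injEq _ _ _ _ |>.mp hl'
            rw [← h2, h1]
        · intro h; rw [h]
      by_cases hfg : f = g
      · rw [if_pos (himg.mpr hfg)]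
        simp [hfg]
      · rw [if_neg (fun h => hfg (himg.mp h))]
        simp [hfg]
    · have hng : ¬((m.1, f m.1) = m ∧ f = g) := by
        rintro ⟨h1, rfl⟩
        exact hg h1
      rw [if_neg hng]
      simp [hg]
  · rw [if_neg (fun h : _ ∧ _ => hf h.1)]
    simp [hf]


/-- Source node (at depth `j`) of a path `p = (input node, hidden nodes)`. -/
def src15 (d_in d w : ℕ) (p : Fin d_in × (Fin (d-1) → Fin w)) (j : ℕ) :
    Fin d_in ⊕ Fin w :=
  if h : 1 ≤ j ∧ j ≤ d - 1 then Sum.inr (p.2 ⟨j - 1, by omega⟩) else Sum.inl p.1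

/-- Target node (at depth `j`) of a path `p`. -/
def tgt15 (d_in d w : ℕ) (p : Fin d_in × (Fin (d-1) → Fin w)) (j : ℕ) :
    Fin w ⊕ Fin 1 :=
  if h : 1 ≤ j ∧ j ≤ d - 1 then Sum.inl (p.2 ⟨j - 1, by omega⟩) else Sum.inr 0

/-- The weight (edge) used by path `p` at layer `l`. -/
def edge15 (d_in d w : ℕ) (p : Fin d_in × (Fin (d-1) → Fin w)) (l : Fin d) :
    Fin d × (Fin d_in ⊕ Fin w) × (Fin w ⊕ Fin 1) :=
  (l, src15 d_in d w p l.val, tgt15 d_in d w p (l.val + 1))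

/-- With frozen gates `G` (independent of the weights and of the input node)
and i.i.d. symmetric `±σ` weights (uniform on `Bool` assignments over the edge set),
the expected Gram matrix satisfies
`E[K(s,s')] = d·σ^(2(d-1)) · (∑ i, x(i,s)x(i,s')) · λ(s,s')`, where
`λ(s,s') = ∑_{q} (∏ l, G s l (q l))·(∏ l, G s' l (q l))` is the overlap of active
sub-networks (paths from a fixed input node); in matrix form
`E[K] = d·σ^(2(d-1)) · (xᵀx) ⊙ λ`. -/
theorem stmt15 (n d_in d w : ℕ) (hd : 1 ≤ d) (σ : ℝ)
    (x : Fin d_in → Fin n → ℝ)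
    (G : Fin n → Fin (d-1) → Fin w → ℝ)
    (Ψ : (Fin d × (Fin d_in ⊕ Fin w) × (Fin w ⊕ Fin 1) → Bool) →
      (Fin d × (Fin d_in ⊕ Fin w) × (Fin w ⊕ Fin 1)) → Fin n → ℝ)
    (hΨ : ∀ ω m t, Ψ ω m t = ∑ p : Fin d_in × (Fin (d-1) → Fin w),
      x p.1 t * (∏ l, G t l (p.2 l)) *
        (if edge15 d_in d w p m.1 = m then
          ∏ l ∈ Finset.univ.erase m.1,
            (if ω (edge15 d_in d w p l) then σ else -σ) else 0)) :
    ∀ s s',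
      (∑ ω : Fin d × (Fin d_in ⊕ Fin w) × (Fin w ⊕ Fin 1) → Bool,
        (1/2 : ℝ) ^ (Fintype.card (Fin d × (Fin d_in ⊕ Fin w) × (Fin w ⊕ Fin 1))) *
          ∑ m, Ψ ω m s * Ψ ω m s')
      = d * σ ^ (2 * (d - 1)) * (∑ i, x i s * x i s') *
          (∑ q : Fin (d-1) → Fin w, (∏ l, G s l (q l)) * (∏ l, G s' l (q l))) := by
  intro s s'
  classical
  set F : (Fin d_in × (Fin (d-1) → Fin w)) → Fin d → ((Fin d_in ⊕ Fin w) × (Fin w ⊕ Fin 1)) :=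
    fun p l => (src15 d_in d w p l.val, tgt15 d_in d w p (l.val + 1)) with hF
  have hedge : ∀ (p : Fin d_in × (Fin (d-1) → Fin w)) (l : Fin d),
      edge15 d_in d w p l = (l, F p l) := fun _ _ => rfl
  set c : (Fin d_in × (Fin (d-1) → Fin w)) → Fin n → ℝ :=
    fun p t => x p.1 t * ∏ l, G t l (p.2 l) with hc
  have hFinj : ∀ p p' : Fin d_in × (Fin (d-1) → Fin w), F p = F p' → p = p' := by
    intro p p' h
    have h1 : p.1 = p'.1 := by
      have := congrFun h ⟨0, hd⟩
      have h0 : src15 d_in d w p 0 = src15 d_in d w p' 0 := congrArg Prod.fst this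
      simpa [src15] using h0
    have h2 : p.2 = p'.2 := by
      funext j
      have hj : (j : ℕ) < d - 1 := j.isLt
      have hlt : (j : ℕ) + 1 < d := by omega
      have := congrFun h ⟨(j : ℕ) + 1, hlt⟩
      have h0 : src15 d_in d w p ((j : ℕ) + 1) = src15 d_in d w p' ((j : ℕ) + 1) :=
        congrArg Prod.fst this
      have hcond : 1 ≤ (j : ℕ) + 1 ∧ (j : ℕ) + 1 ≤ d - 1 := ⟨by omega, by omega⟩
      rw [src15, src15, dif_pos hcond, dif_pos hcond] at h0
      have heq : (⟨(j : ℕ) + 1 - 1, by omega⟩ : Fin (d-1)) = j := by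
        ext; simp
      rw [heq] at h0
      exact Sum.inr_injective h0
    exact Prod.ext h1 h2
  calc
    (∑ ω : Fin d × ((Fin d_in ⊕ Fin w) × (Fin w ⊕ Fin 1)) → Bool,
        (1/2 : ℝ) ^ (Fintype.card (Fin d × ((Fin d_in ⊕ Fin w) × (Fin w ⊕ Fin 1)))) *
        ∑ m, Ψ ω m s * Ψ ω m s')
        = ∑ m : Fin d × ((Fin d_in ⊕ Fin w) × (Fin w ⊕ Fin 1)),
          ∑ p : Fin d_in × (Fin (d-1) → Fin w),
          ∑ p' : Fin d_in × (Fin (d-1) → Fin w), (c p s * c p' s') *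
            (∑ ω : Fin d × ((Fin d_in ⊕ Fin w) × (Fin w ⊕ Fin 1)) → Bool,
              (1/2 : ℝ) ^ (Fintype.card (Fin d × ((Fin d_in ⊕ Fin w) × (Fin w ⊕ Fin 1)))) *
              ((if (m.1, F p m.1) = m then
                  ∏ l ∈ Finset.univ.erase m.1, (if ω (l, F p l) then σ else -σ) else 0) *
               (if (m.1, F p' m.1) = m then
                  ∏ l ∈ Finset.univ.erase m.1, (if ω (l, F p' l) then σ else -σ) else 0))) := by
      have e1 : ∀ ω : Fin d × ((Fin d_in ⊕ Fin w) × (Fin w ⊕ Fin 1)) → Bool,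
          (1/2 : ℝ) ^ (Fintype.card (Fin d × ((Fin d_in ⊕ Fin w) × (Fin w ⊕ Fin 1)))) *
            ∑ m, Ψ ω m s * Ψ ω m s'
          = ∑ m : Fin d × ((Fin d_in ⊕ Fin w) × (Fin w ⊕ Fin 1)),
            ∑ p : Fin d_in × (Fin (d-1) → Fin w),
            ∑ p' : Fin d_in × (Fin (d-1) → Fin w), (c p s * c p' s') *
              ((1/2 : ℝ) ^ (Fintype.card (Fin d × ((Fin d_in ⊕ Fin w) × (Fin w ⊕ Fin 1)))) *
              ((if (m.1, F p m.1) = m then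
                  ∏ l ∈ Finset.univ.erase m.1, (if ω (l, F p l) then σ else -σ) else 0) *
               (if (m.1, F p' m.1) = m then
                  ∏ l ∈ Finset.univ.erase m.1, (if ω (l, F p' l) then σ else -σ) else 0))) := by
        intro ω
        rw [Finset.mul_sum]
        refine Finset.sum_congr rfl fun m _ => ?_
        rw [hΨ ω m s, hΨ ω m s']
        simp only [hedge]
        rw [Finset.sum_mul_sum, Finset.mul_sum]
        refine Finset.sum_congr rfl fun p _ => ?_
        rw [Finset.mul_sum]
        refine Finset.sum_congr rfl fun p' _ => ?_
        simp only [hc]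
        ring
      rw [Finset.sum_congr rfl (fun ω _ => e1 ω)]
      rw [Finset.sum_comm]
      refine Finset.sum_congr rfl fun m _ => ?_
      rw [Finset.sum_comm]
      refine Finset.sum_congr rfl fun p _ => ?_
      rw [Finset.sum_comm]
      refine Finset.sum_congr rfl fun p' _ => ?_
      rw [Finset.mul_sum]
    _ = ∑ m : Fin d × ((Fin d_in ⊕ Fin w) × (Fin w ⊕ Fin 1)),
          ∑ p : Fin d_in × (Fin (d-1) → Fin w),
          ∑ p' : Fin d_in × (Fin (d-1) → Fin w), (c p s * c p' s') *
          (if (m.1, F p m.1) = m ∧ F p = F p' then σ ^ (2*(d-1)) else 0) := by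
      refine Finset.sum_congr rfl fun m _ => Finset.sum_congr rfl fun p _ =>
        Finset.sum_congr rfl fun p' _ => ?_
      rw [auxTerm m (F p) (F p') σ]
    _ = ∑ m : Fin d × ((Fin d_in ⊕ Fin w) × (Fin w ⊕ Fin 1)),
          ∑ p : Fin d_in × (Fin (d-1) → Fin w),
          (if (m.1, F p m.1) = m then (c p s * c p s') * σ ^ (2*(d-1)) else 0) := by
      refine Finset.sum_congr rfl fun m _ => Finset.sum_congr rfl fun p _ => ?_
      have hterm : ∀ p' : Fin d_in × (Fin (d-1) → Fin w), (c p s * c p' s') *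
          (if (m.1, F p m.1) = m ∧ F p = F p' then σ ^ (2*(d-1)) else 0)
          = if p = p' then
              (if (m.1, F p m.1) = m then (c p s * c p' s') * σ ^ (2*(d-1)) else 0)
            else 0 := by
        intro p'
        by_cases hpp : p = p'
        · subst hpp
          by_cases hm : (m.1, F p m.1) = m <;> simp [hm]
        · have hn : ¬((m.1, F p m.1) = m ∧ F p = F p') := by
            rintro ⟨-, h⟩
            exact hpp (hFinj _ _ h)
          simp [hn, hpp]
      simp only [hterm]
      rw [Finset.sum_ite_eq]
      simp
    _ = ∑ p : Fin d_in × (Fin (d-1) → Fin w), (d : ℝ) * ((c p s * c p s') * σ ^ (2*(d-1))) := by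
      rw [Finset.sum_comm]
      refine Finset.sum_congr rfl fun p _ => ?_
      rw [Fintype.sum_prod_type]
      have hinner : ∀ l : Fin d,
          (∑ r : (Fin d_in ⊕ Fin w) × (Fin w ⊕ Fin 1),
            if (l, F p l) = (l, r) then (c p s * c p s') * σ ^ (2*(d-1)) else 0)
          = (c p s * c p s') * σ ^ (2*(d-1)) := by
        intro l
        have hiff : ∀ r : (Fin d_in ⊕ Fin w) × (Fin w ⊕ Fin 1),
            ((l, F p l) = (l, r)) = (F p l = r) := by
          intro r
          simp [Prod.ext_iff]
        simp only [hiff]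
        rw [Finset.sum_ite_eq]
        simp
      simp only [hinner]
      rw [Finset.sum_const, Finset.card_univ, Fintype.card_fin, nsmul_eq_mul]
    _ = d * σ ^ (2 * (d - 1)) * (∑ i, x i s * x i s') *
          (∑ q : Fin (d-1) → Fin w, (∏ l, G s l (q l)) * (∏ l, G s' l (q l))) := by
      rw [← Finset.mul_sum, Fintype.sum_prod_type]
      have hr : d * σ ^ (2 * (d - 1)) * (∑ i, x i s * x i s') *
          (∑ q : Fin (d-1) → Fin w, (∏ l, G s l (q l)) * (∏ l, G s' l (q l)))
          = (d : ℝ) * (((∑ i, x i s * x i s') *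
            (∑ q : Fin (d-1) → Fin w, (∏ l, G s l (q l)) * (∏ l, G s' l (q l)))) *
              σ ^ (2 * (d - 1))) := by ring
      rw [hr, Finset.sum_mul_sum, Finset.sum_mul]
      refine congrArg _ (Finset.sum_congr rfl fun i _ => ?_)
      rw [Finset.sum_mul]
      refine Finset.sum_congr rfl fun q _ => ?_
      simp only [hc]
      ring
end
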